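/- Assume γ* < α + β and, in the case γ = 0, that ℓ is almost increasing on (0,1] (f is almost increasing if there is C ≥ 1 with f(r) ≥ C⁻¹ sup_{s∈(0,r]} f(s)). Then there exists a constant C > 0, independent of r, x, t, k, such that for every r ∈ (0, diam(D)), every x ∈ D with δ_D(x) < 5r, every t ∈ (0, r^α] and every k > 0: ∫ over B(x,r)∩D of (t^{−d/α} ∧ t·|x−z|^{−d−α}) · Φ(δ_D(x,t)/|x−z|) · Ψ(δ_D(z)/r) · ℓ(δ_D(z)/k) dz ≤ C · Ψ(δ_D(x,t)/r) · ℓ(δ_D(x,t)/k), where δ_D(x,t) := δ_D(x) ∨ t^{1/α}. -/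

import Mathlib

/-!
Write `δ = δ_D(x) ∨ t^{1/α}` and `ρ = |x - z|`. Since `δ_D(z) ≤ δ + ρ`, the scaling of `Ψ` and `ℓ`
gives `Ψ(δ_D(z)/r) ℓ(δ_D(z)/k) ≲ (1 ∨ ρ/δ)^(p+ε) Ψ(δ/r) ℓ(δ/k)` with `p > γ*`: for `δ_D(z) ≤ δ`
one uses the lower index of `Ψ` against a smaller loss of `ℓ` (or almost monotonicity if `γ = 0`).
Likewise `Φ(δ/ρ) ≲ (1 ∨ ρ/δ)^(-q)` with `q < β`. The gap `γ* < α + β` allows `p + ε - q < α`, and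
as `t^{1/α} ≤ δ` the kernel `t^{-d/α} ∧ t ρ^{-d-α}` absorbs the weight `(1 ∨ ρ/δ)^(p+ε-q)`: the
product is dominated by `t^{-d/α} (1 + ρ/t^{1/α})^{-d-η}` for some `η > 0`, whose integral over
`ℝ^d` does not depend on `t`.
-/

open Set Metric MeasureTheory Real Filter Topology

noncomputable section

/-- `f` satisfies the lower scaling condition at zero with index `b`. -/
def HasLowerScaling (f : ℝ → ℝ) (b : ℝ) : Prop :=
  ∃ C : ℝ, 1 ≤ C ∧ ∀ s r : ℝ, 0 < s → s ≤ r → r ≤ 1 → C⁻¹ * (r / s) ^ b ≤ f r / f s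

/-- `f` satisfies the upper scaling condition at zero with index `b`. -/
def HasUpperScaling (f : ℝ → ℝ) (b : ℝ) : Prop :=
  ∃ C : ℝ, 1 ≤ C ∧ ∀ s r : ℝ, 0 < s → s ≤ r → r ≤ 1 → f r / f s ≤ C * (r / s) ^ b

/-- The lower Matuszewska index of `f` at zero equals `β`,
i.e. `β` is the supremum of the indices for which the lower scaling condition holds. -/
def LowerIndexIs (f : ℝ → ℝ) (β : ℝ) : Prop :=
  (∀ b : ℝ, b < β → HasLowerScaling f b) ∧ (∀ b : ℝ, β < b → ¬ HasLowerScaling f b)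

/-- The upper Matuszewska index of `f` at zero equals `β`,
i.e. `β` is the infimum of the indices for which the upper scaling condition holds. -/
def UpperIndexIs (f : ℝ → ℝ) (β : ℝ) : Prop :=
  (∀ b : ℝ, β < b → HasUpperScaling f b) ∧ (∀ b : ℝ, b < β → ¬ HasUpperScaling f b)

/-- `f` is almost increasing on `(0,1]`. -/
def AlmostIncreasingOn01 (f : ℝ → ℝ) : Prop :=
  ∃ C : ℝ, 1 ≤ C ∧ ∀ s r : ℝ, 0 < s → s ≤ r → r ≤ 1 → f s ≤ C * f r

/-- `f` is almost decreasing on `(0,1]`. -/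
def AlmostDecreasingOn01 (f : ℝ → ℝ) : Prop :=
  ∃ C : ℝ, 1 ≤ C ∧ ∀ s r : ℝ, 0 < s → s ≤ r → r ≤ 1 → f r ≤ C * f s

/-- A positive Borel function on `(0,∞)`, equal to `1` on `[1,∞)`. -/
def StdFun (f : ℝ → ℝ) : Prop :=
  Measurable f ∧ (∀ r : ℝ, 0 < r → 0 < f r) ∧ (∀ r : ℝ, 1 ≤ r → f r = 1)

/-- The scaling condition for the slowly varying factor `ℓ`, with parameters `β₁, β₂`. -/
def EllScaling (l : ℝ → ℝ) (β₁ β₂ : ℝ) : Prop :=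
  ∀ ε : ℝ, 0 < ε → ∃ C : ℝ, 1 ≤ C ∧ ∀ s r : ℝ, 0 < s → s ≤ r → r ≤ 1 →
    C⁻¹ * (r / s) ^ (-(min ε β₁)) ≤ l r / l s ∧ l r / l s ≤ C * (r / s) ^ (min ε β₂)

/-- `l` has both Matuszewska indices at zero equal to `0`. -/
def SlowlyVaryingScaling (l : ℝ → ℝ) : Prop :=
  ∀ ε : ℝ, 0 < ε → ∃ C : ℝ, 1 ≤ C ∧ ∀ s r : ℝ, 0 < s → s ≤ r → r ≤ 1 →
    C⁻¹ * (r / s) ^ (-ε) ≤ l r / l s ∧ l r / l s ≤ C * (r / s) ^ ε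

/-- The distance to the boundary of `D`. -/
def dd {d : ℕ} (D : Set (EuclideanSpace ℝ (Fin d))) (x : EuclideanSpace ℝ (Fin d)) : ℝ :=
  Metric.infDist x (frontier D)

/-- The function `A_{f,g,h}(t,x,y)`. -/
def Afun {d : ℕ} (α : ℝ) (D : Set (EuclideanSpace ℝ (Fin d))) (f g h : ℝ → ℝ)
    (t : ℝ) (x y : EuclideanSpace ℝ (Fin d)) : ℝ :=
  f (max (min (dd D x) (dd D y)) (t ^ (1 / α)) / dist x y) *
  g (max (max (dd D x) (dd D y)) (t ^ (1 / α)) / dist x y) *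
  h (max (min (dd D x) (dd D y)) (t ^ (1 / α)) /
      min (max (max (dd D x) (dd D y)) (t ^ (1 / α))) (dist x y))

/-- The inward unit vector `𝐧ₓ = (x - Qₓ)/δ_D(x)`. -/
def nv {d : ℕ} (D : Set (EuclideanSpace ℝ (Fin d)))
    (Q : EuclideanSpace ℝ (Fin d) → EuclideanSpace ℝ (Fin d))
    (x : EuclideanSpace ℝ (Fin d)) : EuclideanSpace ℝ (Fin d) :=
  (dd D x)⁻¹ • (x - Q x)

/-- `∫_a^b A_{f,g,h}(t,x,x+u𝐧ₓ) A_{f,g,h}(t,x+u𝐧ₓ,y) u^{-α-1} du`. -/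
def Iint {d : ℕ} (α : ℝ) (D : Set (EuclideanSpace ℝ (Fin d)))
    (Q : EuclideanSpace ℝ (Fin d) → EuclideanSpace ℝ (Fin d))
    (f g h : ℝ → ℝ) (a b t : ℝ) (x y : EuclideanSpace ℝ (Fin d)) : ℝ :=
  ∫ u in Set.Ioo a b,
    Afun α D f g h t x (x + u • nv D Q x) * Afun α D f g h t (x + u • nv D Q x) y *
      u ^ (-α - 1)

/-- `∫_a^b f₀(k₂/u) f₂(u/rr) l(k₁/u) u^{-α-1} du`. -/
def Jint (α : ℝ) (f₀ f₂ l : ℝ → ℝ) (a b rr k₁ k₂ : ℝ) : ℝ :=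
  ∫ u in Set.Ioo a b, f₀ (k₂ / u) * f₂ (u / rr) * l (k₁ / u) * u ^ (-α - 1)

section Scaling

variable {f : ℝ → ℝ} {b : ℝ}

lemma min_one_div_min_one_le {u v : ℝ} (hu : 0 < u) (huv : u ≤ v) :
    min v 1 / min u 1 ≤ v / u := by
  rw [div_le_div_iff₀ (lt_min hu one_pos) hu]
  rcases le_total u 1 with h | h <;> rcases le_total v 1 with h' | h' <;>
    simp only [min_eq_left, min_eq_right, h, h'] <;> nlinarith

lemma div_div_le_min_one_div_min_one {u v M : ℝ} (hu : 0 < u) (huv : u ≤ v) (hM : 1 ≤ M)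
    (hvM : v ≤ M) : v / u / M ≤ min v 1 / min u 1 := by
  have hv : 0 < v := hu.trans_le huv
  rw [div_div, div_le_div_iff₀ (by positivity) (lt_min hu one_pos)]
  rcases le_total u 1 with h | h <;> rcases le_total v 1 with h' | h' <;>
    simp only [min_eq_left, min_eq_right, h, h'] <;> nlinarith [mul_le_mul_of_nonneg_left hM hv.le]

lemma one_div_min_one {x : ℝ} (hx : 0 < x) : 1 / min x 1 = max 1 x⁻¹ := by
  rcases le_total x 1 with h | h
  · rw [min_eq_left h, max_eq_right (one_le_inv₀ hx |>.2 h), one_div]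
  · rw [min_eq_right h, max_eq_left (inv_le_one_of_one_le₀ h), div_one]

variable (hone : ∀ r : ℝ, 1 ≤ r → f r = 1)
include hone

-- Since `f = f ∘ (min · 1)`, the scaling bounds on `(0, 1]` extend to all of `(0, ∞)`.

lemma apply_min_one (u : ℝ) : f (min u 1) = f u := by
  rcases le_total u 1 with h | h
  · rw [min_eq_left h]
  · rw [min_eq_right h, hone 1 le_rfl, hone u h]

theorem AlmostIncreasingOn01.le_mul (h : AlmostIncreasingOn01 f) :
    ∃ C, 0 < C ∧ ∀ u v : ℝ, 0 < u → u ≤ v → f u ≤ C * f v := by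
  obtain ⟨C, hC, H⟩ := h
  refine ⟨C, by linarith, fun u v hu huv => ?_⟩
  simpa only [apply_min_one hone] using
    H _ _ (lt_min hu one_pos) (min_le_min_right 1 huv) (min_le_right v 1)

variable (hpos : ∀ r : ℝ, 0 < r → 0 < f r)
include hpos

theorem HasUpperScaling.le_rpow_mul (h : HasUpperScaling f b) (hb : 0 ≤ b) :
    ∃ C, 0 < C ∧ ∀ u v : ℝ, 0 < u → u ≤ v → f v ≤ C * (v / u) ^ b * f u := by
  obtain ⟨C, hC, H⟩ := h
  refine ⟨C, by linarith, fun u v hu huv => ?_⟩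
  have hu1 : 0 < min u 1 := lt_min hu one_pos
  have key := H _ _ hu1 (min_le_min_right 1 huv) (min_le_right v 1)
  rw [apply_min_one hone, apply_min_one hone, div_le_iff₀ (hpos u hu)] at key
  calc f v ≤ C * (min v 1 / min u 1) ^ b * f u := key
    _ ≤ C * (v / u) ^ b * f u := by
      have hR : 0 ≤ min v 1 / min u 1 := div_nonneg (le_min (hu.le.trans huv) zero_le_one) hu1.le
      gcongr C * ?_ * f u
      · exact (hpos u hu).le
      · exact Real.rpow_le_rpow hR (min_one_div_min_one_le hu huv) hb

theorem HasLowerScaling.le_rpow_mul (h : HasLowerScaling f b) :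
    ∃ C, 0 < C ∧ ∀ u v : ℝ, 0 < u → u ≤ v →
      f u ≤ C * (min v 1 / min u 1) ^ (-b) * f v := by
  obtain ⟨C, hC, H⟩ := h
  refine ⟨C, by linarith, fun u v hu huv => ?_⟩
  have hu1 : 0 < min u 1 := lt_min hu one_pos
  have hR : 0 < min v 1 / min u 1 := div_pos (lt_min (hu.trans_le huv) one_pos) hu1
  have key := H _ _ hu1 (min_le_min_right 1 huv) (min_le_right v 1)
  rw [apply_min_one hone, apply_min_one hone, le_div_iff₀ (hpos u hu)] at key
  calc f u = C * (min v 1 / min u 1) ^ (-b) * (C⁻¹ * (min v 1 / min u 1) ^ b * f u) := by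
        rw [Real.rpow_neg hR.le]; field_simp
    _ ≤ C * (min v 1 / min u 1) ^ (-b) * f v := by gcongr

theorem HasLowerScaling.le_rpow_mul_of_nonpos (h : HasLowerScaling f b) (hb : b ≤ 0) :
    ∃ C, 0 < C ∧ ∀ u v : ℝ, 0 < u → u ≤ v → f u ≤ C * (v / u) ^ (-b) * f v := by
  obtain ⟨C, hC, H⟩ := h.le_rpow_mul hone hpos
  refine ⟨C, hC, fun u v hu huv => (H u v hu huv).trans ?_⟩
  have hR : 0 ≤ min v 1 / min u 1 :=
    div_nonneg (le_min (hu.le.trans huv) zero_le_one) (le_min hu.le zero_le_one)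
  gcongr C * ?_ * f v
  · exact (hpos v (hu.trans_le huv)).le
  · exact Real.rpow_le_rpow hR (min_one_div_min_one_le hu huv) (neg_nonneg.2 hb)

theorem HasLowerScaling.le_rpow_mul_of_le (h : HasLowerScaling f b) (hb : 0 ≤ b) {M : ℝ}
    (hM : 1 ≤ M) :
    ∃ C, 0 < C ∧ ∀ u v : ℝ, 0 < u → u ≤ v → v ≤ M → f u ≤ C * (u / v) ^ b * f v := by
  obtain ⟨C, hC, H⟩ := h.le_rpow_mul hone hpos
  refine ⟨C * M ^ b, by positivity, fun u v hu huv hvM => (H u v hu huv).trans ?_⟩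
  have hv : 0 < v := hu.trans_le huv
  have hscale : (v / u / M) ^ (-b) = M ^ b * (u / v) ^ b := by
    rw [Real.rpow_neg (by positivity), ← Real.inv_rpow (by positivity),
      ← Real.mul_rpow (by positivity) (by positivity)]
    congr 1
    field_simp
  calc C * (min v 1 / min u 1) ^ (-b) * f v ≤ C * (v / u / M) ^ (-b) * f v := by
        gcongr C * ?_ * f v
        · exact (hpos v hv).le
        · exact Real.rpow_le_rpow_of_nonpos (by positivity)
            (div_div_le_min_one_div_min_one hu huv hM hvM) (neg_nonpos.2 hb)
    _ = C * M ^ b * (u / v) ^ b * f v := by rw [hscale]; ring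

theorem HasLowerScaling.apply_div_le (h : HasLowerScaling f b) :
    ∃ C, 0 < C ∧ ∀ u v : ℝ, 0 < u → 0 < v → f (u / v) ≤ C * max 1 (v / u) ^ (-b) := by
  obtain ⟨C, hC, H⟩ := h.le_rpow_mul hone hpos
  refine ⟨C, hC, fun u v hu hv => ?_⟩
  have key := H (u / v) (max (u / v) 1) (by positivity) (le_max_left _ _)
  rwa [hone _ (le_max_right _ _), mul_one, min_eq_right (le_max_right _ _), one_div_min_one
    (by positivity), inv_div] at key

end Scaling

theorem SlowlyVaryingScaling.hasLowerScaling {l : ℝ → ℝ} (h : SlowlyVaryingScaling l) {ε : ℝ}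
    (hε : 0 < ε) : HasLowerScaling l (-ε) :=
  let ⟨C, hC, H⟩ := h ε hε
  ⟨C, hC, fun s r hs hsr hr => (H s r hs hsr hr).1⟩

theorem SlowlyVaryingScaling.hasUpperScaling {l : ℝ → ℝ} (h : SlowlyVaryingScaling l) {ε : ℝ}
    (hε : 0 < ε) : HasUpperScaling l ε :=
  let ⟨C, hC, H⟩ := h ε hε
  ⟨C, hC, fun s r hs hsr hr => (H s r hs hsr hr).2⟩

section Product

variable {Ψ l : ℝ → ℝ} (hΨpos : ∀ r : ℝ, 0 < r → 0 < Ψ r) (hΨone : ∀ r : ℝ, 1 ≤ r → Ψ r = 1)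
  (hlpos : ∀ r : ℝ, 0 < r → 0 < l r) (hlone : ∀ r : ℝ, 1 ≤ r → l r = 1)
include hΨpos hΨone hlpos hlone

theorem scaled_mul_le_rpow_mul {p e : ℝ} (hΨp : HasUpperScaling Ψ p) (hp : 0 ≤ p)
    (hle : HasUpperScaling l e) (he : 0 ≤ e) :
    ∃ K, 0 < K ∧ ∀ r k a δ : ℝ, 0 < r → 0 < k → 0 < δ → δ ≤ a →
      Ψ (a / r) * l (a / k) ≤ K * (a / δ) ^ (p + e) * (Ψ (δ / r) * l (δ / k)) := by
  obtain ⟨C₁, hC₁, H₁⟩ := hΨp.le_rpow_mul hΨone hΨpos hp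
  obtain ⟨C₂, hC₂, H₂⟩ := hle.le_rpow_mul hlone hlpos he
  refine ⟨C₁ * C₂, by positivity, fun r k a δ hr hk hδ hδa => ?_⟩
  have ha : 0 < a := hδ.trans_le hδa
  have h₁ := H₁ (δ / r) (a / r) (by positivity) (by gcongr)
  have h₂ := H₂ (δ / k) (a / k) (by positivity) (by gcongr)
  rw [div_div_div_cancel_right₀ hr.ne'] at h₁
  rw [div_div_div_cancel_right₀ hk.ne'] at h₂
  calc Ψ (a / r) * l (a / k)
      ≤ (C₁ * (a / δ) ^ p * Ψ (δ / r)) * (C₂ * (a / δ) ^ e * l (δ / k)) :=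
        mul_le_mul h₁ h₂ (hlpos _ (by positivity)).le
          (mul_nonneg (by positivity) (hΨpos _ (by positivity)).le)
    _ = C₁ * C₂ * (a / δ) ^ (p + e) * (Ψ (δ / r) * l (δ / k)) := by
        rw [Real.rpow_add (by positivity)]; ring

theorem scaled_mul_le_mul {γ M : ℝ} (hγ : 0 ≤ γ) (hΨinc : AlmostIncreasingOn01 Ψ)
    (hΨlow : LowerIndexIs Ψ γ) (hl : SlowlyVaryingScaling l)
    (hlinc : γ = 0 → AlmostIncreasingOn01 l) (hM : 1 ≤ M) :
    ∃ K, 0 < K ∧ ∀ r k a δ : ℝ, 0 < r → 0 < k → 0 < a → a ≤ δ → δ ≤ M * r →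
      Ψ (a / r) * l (a / k) ≤ K * (Ψ (δ / r) * l (δ / k)) := by
  rcases hγ.lt_or_eq with hγ | rfl
  · obtain ⟨C₁, hC₁, H₁⟩ :=
      (hΨlow.1 (γ / 2) (by linarith)).le_rpow_mul_of_le hΨone hΨpos (by linarith) hM
    obtain ⟨C₂, hC₂, H₂⟩ := (hl.hasLowerScaling (ε := γ / 2) (by linarith)).le_rpow_mul_of_nonpos
      hlone hlpos (by linarith)
    refine ⟨C₁ * C₂, by positivity, fun r k a δ hr hk ha haδ hδM => ?_⟩
    have hδ : 0 < δ := ha.trans_le haδ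
    have h₁ := H₁ (a / r) (δ / r) (by positivity) (by gcongr) ((div_le_iff₀ hr).2 (by linarith))
    have h₂ := H₂ (a / k) (δ / k) (by positivity) (by gcongr)
    rw [div_div_div_cancel_right₀ hr.ne'] at h₁
    rw [div_div_div_cancel_right₀ hk.ne', neg_neg] at h₂
    -- `l` is taken with lower index `-γ/2`, so its loss `(δ/a)^(γ/2)` cancels the gain of `Ψ`
    calc Ψ (a / r) * l (a / k)
        ≤ (C₁ * (a / δ) ^ (γ / 2) * Ψ (δ / r)) * (C₂ * (δ / a) ^ (γ / 2) * l (δ / k)) :=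
          mul_le_mul h₁ h₂ (hlpos _ (by positivity)).le
            (mul_nonneg (by positivity) (hΨpos _ (by positivity)).le)
      _ = C₁ * C₂ * (a / δ * (δ / a)) ^ (γ / 2) * (Ψ (δ / r) * l (δ / k)) := by
          rw [Real.mul_rpow (by positivity) (by positivity)]; ring
      _ = C₁ * C₂ * (Ψ (δ / r) * l (δ / k)) := by
          rw [div_mul_div_cancel₀ hδ.ne', div_self ha.ne', Real.one_rpow, mul_one]
  · obtain ⟨C₁, hC₁, H₁⟩ := hΨinc.le_mul hΨone
    obtain ⟨C₂, hC₂, H₂⟩ := (hlinc rfl).le_mul hlone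
    refine ⟨C₁ * C₂, by positivity, fun r k a δ hr hk ha haδ _ => ?_⟩
    have hδ : 0 < δ := ha.trans_le haδ
    calc Ψ (a / r) * l (a / k) ≤ (C₁ * Ψ (δ / r)) * (C₂ * l (δ / k)) :=
          mul_le_mul (H₁ _ _ (by positivity) (by gcongr)) (H₂ _ _ (by positivity) (by gcongr))
            (hlpos _ (by positivity)).le (mul_nonneg hC₁.le (hΨpos _ (by positivity)).le)
      _ = C₁ * C₂ * (Ψ (δ / r) * l (δ / k)) := by ring

theorem scaled_mul_le_max_rpow_mul {γ M p ε : ℝ} (hγ : 0 ≤ γ) (hΨinc : AlmostIncreasingOn01 Ψ)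
    (hΨlow : LowerIndexIs Ψ γ) (hl : SlowlyVaryingScaling l)
    (hlinc : γ = 0 → AlmostIncreasingOn01 l) (hM : 1 ≤ M) (hΨp : HasUpperScaling Ψ p)
    (hp : 0 ≤ p) (hε : 0 < ε) :
    ∃ K, 0 < K ∧ ∀ r k a δ ρ : ℝ, 0 < r → 0 < k → 0 < a → 0 < δ → δ ≤ M * r → a ≤ δ + ρ →
      Ψ (a / r) * l (a / k) ≤ K * max 1 (ρ / δ) ^ (p + ε) * (Ψ (δ / r) * l (δ / k)) := by
  obtain ⟨K₁, hK₁, H₁⟩ :=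
    scaled_mul_le_mul hΨpos hΨone hlpos hlone hγ hΨinc hΨlow hl hlinc hM
  obtain ⟨K₂, hK₂, H₂⟩ :=
    scaled_mul_le_rpow_mul hΨpos hΨone hlpos hlone hΨp hp (hl.hasUpperScaling hε) hε.le
  refine ⟨K₁ + K₂ * 2 ^ (p + ε), by positivity, fun r k a δ ρ hr hk ha hδ hδM haρ => ?_⟩
  set w := max 1 (ρ / δ)
  have hw : 1 ≤ w ^ (p + ε) := Real.one_le_rpow (le_max_left _ _) (by positivity)
  have hG : 0 ≤ Ψ (δ / r) * l (δ / k) :=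
    (mul_pos (hΨpos _ (by positivity)) (hlpos _ (by positivity))).le
  rcases le_total a δ with haδ | hδa
  · calc Ψ (a / r) * l (a / k) ≤ K₁ * (Ψ (δ / r) * l (δ / k)) := H₁ r k a δ hr hk ha haδ hδM
      _ ≤ (K₁ + K₂ * 2 ^ (p + ε)) * w ^ (p + ε) * (Ψ (δ / r) * l (δ / k)) := by
          gcongr
          nlinarith [show 0 ≤ K₂ * 2 ^ (p + ε) by positivity]
  · have haw : a / δ ≤ 2 * w := by
      rw [div_le_iff₀ hδ]
      have h₁ : δ ≤ δ * w := le_mul_of_one_le_right hδ.le (le_max_left _ _)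
      have h₂ : ρ ≤ δ * w := by
        rw [← div_le_iff₀' hδ]; exact le_max_right _ _
      linarith
    calc Ψ (a / r) * l (a / k) ≤ K₂ * (a / δ) ^ (p + ε) * (Ψ (δ / r) * l (δ / k)) :=
          H₂ r k a δ hr hk hδ hδa
      _ ≤ K₂ * (2 * w) ^ (p + ε) * (Ψ (δ / r) * l (δ / k)) := by gcongr
      _ = K₂ * 2 ^ (p + ε) * w ^ (p + ε) * (Ψ (δ / r) * l (δ / k)) := by
          rw [Real.mul_rpow (by norm_num) (by positivity)]; ring
      _ ≤ (K₁ + K₂ * 2 ^ (p + ε)) * w ^ (p + ε) * (Ψ (δ / r) * l (δ / k)) := by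
          gcongr; linarith

theorem apply_div_mul_scaled_mul_le {Φ : ℝ → ℝ} (hΦpos : ∀ r : ℝ, 0 < r → 0 < Φ r)
    (hΦone : ∀ r : ℝ, 1 ≤ r → Φ r = 1) {γ M p ε q : ℝ} (hΦq : HasLowerScaling Φ q) (hγ : 0 ≤ γ)
    (hΨinc : AlmostIncreasingOn01 Ψ) (hΨlow : LowerIndexIs Ψ γ) (hl : SlowlyVaryingScaling l)
    (hlinc : γ = 0 → AlmostIncreasingOn01 l) (hM : 1 ≤ M) (hΨp : HasUpperScaling Ψ p)
    (hp : 0 ≤ p) (hε : 0 < ε) :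
    ∃ C, 0 < C ∧ ∀ r k a δ ρ : ℝ, 0 < r → 0 < k → 0 < a → 0 < δ → 0 < ρ → δ ≤ M * r →
      a ≤ δ + ρ → Φ (δ / ρ) * (Ψ (a / r) * l (a / k)) ≤
        C * (Ψ (δ / r) * l (δ / k)) * max 1 (ρ / δ) ^ (p + ε - q) := by
  obtain ⟨C₁, hC₁, H₁⟩ := hΦq.apply_div_le hΦone hΦpos
  obtain ⟨C₂, hC₂, H₂⟩ := scaled_mul_le_max_rpow_mul hΨpos hΨone hlpos hlone hγ hΨinc hΨlow hl
    hlinc hM hΨp hp hε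
  refine ⟨C₁ * C₂, by positivity, fun r k a δ ρ hr hk ha hδ hρ hδM haρ => ?_⟩
  have hw : 0 < max 1 (ρ / δ) := lt_max_of_lt_left one_pos
  calc Φ (δ / ρ) * (Ψ (a / r) * l (a / k))
      ≤ (C₁ * max 1 (ρ / δ) ^ (-q)) *
          (C₂ * max 1 (ρ / δ) ^ (p + ε) * (Ψ (δ / r) * l (δ / k))) :=
        mul_le_mul (H₁ δ ρ hδ hρ) (H₂ r k a δ ρ hr hk ha hδ hδM haρ)
          (mul_pos (hΨpos _ (by positivity)) (hlpos _ (by positivity))).le (by positivity)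
    _ = C₁ * C₂ * (Ψ (δ / r) * l (δ / k)) * (max 1 (ρ / δ) ^ (-q) * max 1 (ρ / δ) ^ (p + ε)) := by
        ring
    _ = C₁ * C₂ * (Ψ (δ / r) * l (δ / k)) * max 1 (ρ / δ) ^ (p + ε - q) := by
        rw [← Real.rpow_add hw, neg_add_eq_sub]

end Product

section Kernel

variable {n α t ρ : ℝ}

lemma min_rpow_le_mul_max_one_rpow (ht : 0 < t) (hα : 0 < α) (hρ : 0 ≤ ρ) :
    min (t ^ (-n / α)) (t * ρ ^ (-n - α)) ≤
      t ^ (-n / α) * max 1 (ρ / t ^ (1 / α)) ^ (-(n + α)) := by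
  set T := t ^ (1 / α)
  have hT : 0 < T := Real.rpow_pos_of_pos ht _
  rcases le_total ρ T with h | h
  · rw [max_eq_left ((div_le_one hT).2 h), Real.one_rpow, mul_one]
    exact min_le_left _ _
  · rw [max_eq_right ((one_le_div hT).2 h)]
    refine (min_le_right _ _).trans (le_of_eq ?_)
    have htT : T ^ α = t := by
      rw [← Real.rpow_mul ht.le, one_div_mul_cancel hα.ne', Real.rpow_one]
    have htn : t ^ (-n / α) = T ^ (-n) := by
      rw [← Real.rpow_mul ht.le]; congr 1; ring
    rw [htn, Real.div_rpow hρ hT.le, mul_div_left_comm, ← Real.rpow_sub hT,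
      show -n - -(n + α) = α by ring, htT, show -n - α = -(n + α) by ring, mul_comm]

lemma rpow_le_rpow_max_zero {w W θ : ℝ} (hw : 1 ≤ w) (hwW : w ≤ W) : w ^ θ ≤ W ^ max θ 0 :=
  (Real.rpow_le_rpow_of_exponent_le hw (le_max_left θ 0)).trans
    (Real.rpow_le_rpow (by linarith) hwW (le_max_right θ 0))

lemma max_one_rpow_neg_le {s m : ℝ} (hs : 0 ≤ s) (hm : 0 ≤ m) :
    max 1 s ^ (-m) ≤ 2 ^ m * (1 + s) ^ (-m) := by
  have hhalf : ((1 + s) / 2) ^ (-m) = 2 ^ m * (1 + s) ^ (-m) := by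
    rw [Real.div_rpow (by positivity) zero_le_two, Real.rpow_neg zero_le_two, div_inv_eq_mul,
      mul_comm]
  rw [← hhalf]
  refine Real.rpow_le_rpow_of_nonpos (by positivity) ?_ (neg_nonpos.2 hm)
  rcases le_total s 1 with h | h
  · rw [max_eq_left h]; linarith
  · rw [max_eq_right h]; linarith

theorem min_rpow_mul_max_one_rpow_le {δ θ : ℝ} (ht : 0 < t) (hα : 0 < α) (hn : 0 ≤ n)
    (hθ : θ ≤ α) (hρ : 0 ≤ ρ) (hTδ : t ^ (1 / α) ≤ δ) :
    min (t ^ (-n / α)) (t * ρ ^ (-n - α)) * max 1 (ρ / δ) ^ θ ≤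
      2 ^ (n + α - max θ 0) * t ^ (-n / α) * (1 + ρ / t ^ (1 / α)) ^ (-(n + α - max θ 0)) := by
  set T := t ^ (1 / α)
  have hT : 0 < T := Real.rpow_pos_of_pos ht _
  set W := max 1 (ρ / T)
  have hW : 0 < W := lt_max_of_lt_left one_pos
  have hm : 0 ≤ n + α - max θ 0 := by
    have := max_le hθ hα.le
    linarith
  calc min (t ^ (-n / α)) (t * ρ ^ (-n - α)) * max 1 (ρ / δ) ^ θ
      ≤ t ^ (-n / α) * W ^ (-(n + α)) * W ^ max θ 0 :=
        mul_le_mul (min_rpow_le_mul_max_one_rpow ht hα hρ)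
          (rpow_le_rpow_max_zero (le_max_left _ _)
            (max_le_max le_rfl (div_le_div_of_nonneg_left hρ hT hTδ)))
          (by positivity) (by positivity)
    _ = t ^ (-n / α) * W ^ (-(n + α - max θ 0)) := by
        rw [mul_assoc, ← Real.rpow_add hW]; ring_nf
    _ ≤ t ^ (-n / α) * (2 ^ (n + α - max θ 0) * (1 + ρ / T) ^ (-(n + α - max θ 0))) := by
        gcongr
        exact max_one_rpow_neg_le (by positivity) hm
    _ = 2 ^ (n + α - max θ 0) * t ^ (-n / α) * (1 + ρ / T) ^ (-(n + α - max θ 0)) := by ring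

end Kernel

lemma min_rpow_dist_mul_le {E : Type*} [PseudoMetricSpace E] {n α θ t δ A h : ℝ} {x z : E}
    (ht : 0 < t) (hα : 0 < α) (hn : 0 ≤ n) (hθ : θ ≤ α) (hTδ : t ^ (1 / α) ≤ δ) (hA : 0 ≤ A)
    (hh : z ≠ x → 0 ≤ h ∧ h ≤ A * max 1 (dist x z / δ) ^ θ) :
    0 ≤ min (t ^ (-n / α)) (t * dist x z ^ (-n - α)) * h ∧
      min (t ^ (-n / α)) (t * dist x z ^ (-n - α)) * h ≤ A * 2 ^ (n + α - max θ 0) *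
        t ^ (-n / α) * (1 + dist x z / t ^ (1 / α)) ^ (-(n + α - max θ 0)) := by
  rcases eq_or_ne z x with rfl | hzx
  · rw [dist_self, Real.zero_rpow (by linarith), mul_zero, min_eq_right (by positivity),
      zero_mul]
    exact ⟨le_rfl, by positivity⟩
  obtain ⟨hh₀, hhA⟩ := hh hzx
  have hk₀ : 0 ≤ min (t ^ (-n / α)) (t * dist x z ^ (-n - α)) :=
    le_min (by positivity) (by positivity)
  refine ⟨mul_nonneg hk₀ hh₀, ?_⟩
  calc _ ≤ min (t ^ (-n / α)) (t * dist x z ^ (-n - α)) * (A * max 1 (dist x z / δ) ^ θ) :=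
        mul_le_mul_of_nonneg_left hhA hk₀
    _ = A * (min (t ^ (-n / α)) (t * dist x z ^ (-n - α)) * max 1 (dist x z / δ) ^ θ) := by
        ring
    _ ≤ _ := by
        rw [mul_assoc A, mul_assoc A]
        gcongr A * ?_
        exact min_rpow_mul_max_one_rpow_le ht hα hn hθ dist_nonneg hTδ

lemma setIntegral_le_integral_of_forall_le {X : Type*} [MeasurableSpace X] {μ : Measure X}
    {S : Set X} {f g : X → ℝ} (hS : MeasurableSet S) (hg : Integrable g μ) (hg₀ : 0 ≤ g)
    (hf₀ : ∀ z ∈ S, 0 ≤ f z) (hfg : ∀ z ∈ S, f z ≤ g z) :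
    ∫ z in S, f z ∂μ ≤ ∫ z, g z ∂μ :=
  (integral_mono_of_nonneg ((ae_restrict_iff' hS).2 (.of_forall hf₀)) hg.integrableOn
    ((ae_restrict_iff' hS).2 (.of_forall hfg))).trans
    (setIntegral_le_integral hg (.of_forall hg₀))

section Rescaling

variable {E : Type*} [NormedAddCommGroup E] [NormedSpace ℝ E] [MeasurableSpace E] [BorelSpace E]
  [FiniteDimensional ℝ E] (μ : Measure E) [μ.IsAddHaarMeasure] {F : E → ℝ} {T : ℝ}

lemma MeasureTheory.Integrable.comp_inv_smul_sub (hF : Integrable F μ) (hT : T ≠ 0) (x : E) :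
    Integrable (fun z => F (T⁻¹ • (z - x))) μ :=
  ((integrable_comp_smul_iff μ F (inv_ne_zero hT)).2 hF).comp_sub_right x

lemma integral_comp_inv_smul_sub (F : E → ℝ) (hT : 0 ≤ T) (x : E) :
    ∫ z, F (T⁻¹ • (z - x)) ∂μ = T ^ Module.finrank ℝ E * ∫ u, F u ∂μ := by
  rw [integral_sub_right_eq_self (fun z => F (T⁻¹ • z)) x,
    Measure.integral_comp_inv_smul_of_nonneg μ F hT, smul_eq_mul]

end Rescaling

theorem exists_integral_min_rpow_mul_le (d : ℕ) {α θ : ℝ} (hα : 0 < α) (hθ : θ < α) :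
    ∃ c, 0 ≤ c ∧ ∀ (S : Set (EuclideanSpace ℝ (Fin d))) (x : EuclideanSpace ℝ (Fin d))
      (h : EuclideanSpace ℝ (Fin d) → ℝ) (t δ A : ℝ), MeasurableSet S → 0 < t →
      t ^ (1 / α) ≤ δ → 0 ≤ A →
      (∀ z ∈ S, z ≠ x → 0 ≤ h z ∧ h z ≤ A * max 1 (dist x z / δ) ^ θ) →
      ∫ z in S, min (t ^ (-(d : ℝ) / α)) (t * dist x z ^ (-(d : ℝ) - α)) * h z ≤ c * A := by
  set m := (d : ℝ) + α - max θ 0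
  have hm : (d : ℝ) < m := by
    have := max_lt hθ hα
    linarith
  set F : EuclideanSpace ℝ (Fin d) → ℝ := fun u => (1 + ‖u‖) ^ (-m)
  have hF : Integrable F := integrable_one_add_norm (by rwa [finrank_euclideanSpace_fin])
  have hF₀ : 0 ≤ F := fun u => by positivity
  refine ⟨2 ^ m * ∫ u, F u, mul_nonneg (by positivity) (integral_nonneg hF₀), ?_⟩
  intro S x h t δ A hS ht hTδ hA hh
  have hT : 0 < t ^ (1 / α) := Real.rpow_pos_of_pos ht _
  set g := fun z => A * 2 ^ m * t ^ (-(d : ℝ) / α) * F ((t ^ (1 / α))⁻¹ • (z - x))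
  have hg : Integrable g := (hF.comp_inv_smul_sub volume hT.ne' x).const_mul _
  have hTd : t ^ (-(d : ℝ) / α) * (t ^ (1 / α)) ^ d = 1 := by
    rw [← Real.rpow_natCast, ← Real.rpow_mul ht.le, ← Real.rpow_add ht,
      show -(d : ℝ) / α + 1 / α * d = 0 by ring, Real.rpow_zero]
  have hgint : ∫ z, g z = 2 ^ m * (∫ u, F u) * A := by
    rw [integral_const_mul, integral_comp_inv_smul_sub volume F hT.le, finrank_euclideanSpace_fin,
      ← mul_assoc, mul_assoc _ _ (_ ^ d), hTd]
    ring
  have hgz : ∀ z, A * 2 ^ m * t ^ (-(d : ℝ) / α) * (1 + dist x z / t ^ (1 / α)) ^ (-m) = g z :=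
    fun z => by
      show _ = A * 2 ^ m * t ^ (-(d : ℝ) / α) * (1 + ‖(t ^ (1 / α))⁻¹ • (z - x)‖) ^ (-m)
      rw [norm_smul, norm_inv, Real.norm_of_nonneg hT.le, inv_mul_eq_div, ← dist_eq_norm,
        dist_comm]
  have hpt := fun z hz =>
    min_rpow_dist_mul_le (z := z) ht hα d.cast_nonneg hθ.le hTδ hA (hh z hz)
  rw [← hgint]
  exact setIntegral_le_integral_of_forall_le hS hg (fun z => by positivity)
    (fun z hz => (hpt z hz).1) (fun z hz => (hpt z hz).2.trans_eq (hgz z))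

lemma dd_le_dd_add_dist {d : ℕ} (D : Set (EuclideanSpace ℝ (Fin d)))
    (x z : EuclideanSpace ℝ (Fin d)) : dd D z ≤ dd D x + dist x z := by
  rw [dist_comm]
  exact infDist_le_infDist_add_dist

lemma infDist_frontier_pos {E : Type*} [NormedAddCommGroup E] [NormedSpace ℝ E] [Nontrivial E]
    {D : Set E} (hD : IsOpen D) (hDb : Bornology.IsBounded D) {z : E} (hz : z ∈ D) :
    0 < infDist z (frontier D) := by
  have hne : (frontier D).Nonempty :=
    nonempty_frontier_iff.2 ⟨⟨z, hz⟩, fun h => NormedSpace.unbounded_univ ℝ E (h ▸ hDb)⟩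
  refine (isClosed_frontier.notMem_iff_infDist_pos hne).1 fun hzf => ?_
  rw [hD.frontier_eq] at hzf
  exact hzf.2 hz

theorem statement_16_general
    (d : ℕ) (hd : 2 ≤ d)
    (D : Set (EuclideanSpace ℝ (Fin d))) (hDopen : IsOpen D)
    (hDbdd : Bornology.IsBounded D)
    (α β γ γs : ℝ) (hα0 : 0 < α)
    (hγ : 0 ≤ γ) (hγs : γ ≤ γs)
    (Φ Ψ l : ℝ → ℝ)
    (hΦ : StdFun Φ)
    (hΦlow : LowerIndexIs Φ β)
    (hΨ : StdFun Ψ) (hΨinc : AlmostIncreasingOn01 Ψ)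
    (hΨlow : LowerIndexIs Ψ γ) (hΨup : UpperIndexIs Ψ γs)
    (hl : StdFun l) (hlscale : SlowlyVaryingScaling l)
    (hgap : γs < α + β) (hlinc : γ = 0 → AlmostIncreasingOn01 l) :
    ∃ C : ℝ, 0 < C ∧
      ∀ r : ℝ, 0 < r → r < Metric.diam D → ∀ x ∈ D, dd D x < 5 * r →
        ∀ t : ℝ, 0 < t → t ≤ r ^ α → ∀ k : ℝ, 0 < k →
          (∫ z in D ∩ Metric.ball x r,
              min (t ^ (-(d : ℝ) / α)) (t * dist x z ^ (-(d : ℝ) - α)) *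
                Φ (max (dd D x) (t ^ (1 / α)) / dist x z) * Ψ (dd D z / r) *
                l (dd D z / k))
            ≤ C * (Ψ (max (dd D x) (t ^ (1 / α)) / r) *
                l (max (dd D x) (t ^ (1 / α)) / k)) := by
  have : Nonempty (Fin d) := ⟨⟨0, by omega⟩⟩
  obtain ⟨η, hη, hηgap⟩ : ∃ η : ℝ, 0 < η ∧ γs + 4 * η = α + β :=
    ⟨(α + β - γs) / 4, by linarith, by ring⟩
  obtain ⟨C₁, hC₁, H₁⟩ := apply_div_mul_scaled_mul_le hΨ.2.1 hΨ.2.2 hl.2.1 hl.2.2 hΦ.2.1 hΦ.2.2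
    (hΦlow.1 (β - η) (by linarith)) hγ hΨinc hΨlow hlscale hlinc (M := 5) (by norm_num)
    (hΨup.1 (γs + η) (by linarith)) (by linarith) hη
  obtain ⟨c, hc, Hint⟩ :=
    exists_integral_min_rpow_mul_le d hα0 (θ := γs + η + η - (β - η)) (by linarith)
  refine ⟨c * C₁ + 1, by positivity, fun r hr _ x hx hdx t ht htr k hk => ?_⟩
  set δ := max (dd D x) (t ^ (1 / α))
  have hTr : t ^ (1 / α) ≤ r := by rwa [one_div, Real.rpow_inv_le_iff_of_pos ht.le hr.le hα0]
  have hδ : 0 < δ := lt_max_of_lt_right (by positivity)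
  have hG : 0 < Ψ (δ / r) * l (δ / k) :=
    mul_pos (hΨ.2.1 _ (by positivity)) (hl.2.1 _ (by positivity))
  calc _ = ∫ z in D ∩ ball x r, min (t ^ (-(d : ℝ) / α)) (t * dist x z ^ (-(d : ℝ) - α)) *
        (Φ (δ / dist x z) * (Ψ (dd D z / r) * l (dd D z / k))) := by simp only [mul_assoc]
    _ ≤ c * (C₁ * (Ψ (δ / r) * l (δ / k))) := by
        refine Hint _ x _ t δ _ (hDopen.measurableSet.inter measurableSet_ball) ht
          (le_max_right _ _) (by positivity) fun z hz hzx => ?_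
        have hρ : 0 < dist x z := dist_pos.2 hzx.symm
        have ha : 0 < dd D z := infDist_frontier_pos hDopen hDbdd hz.1
        refine ⟨mul_nonneg (hΦ.2.1 _ (by positivity)).le
          (mul_pos (hΨ.2.1 _ (by positivity)) (hl.2.1 _ (by positivity))).le, ?_⟩
        exact H₁ r k _ δ _ hr hk ha hδ hρ (max_le hdx.le (by linarith))
          ((dd_le_dd_add_dist D x z).trans (by gcongr; exact le_max_left _ _))
    _ ≤ (c * C₁ + 1) * (Ψ (δ / r) * l (δ / k)) := by nlinarith

/-- Lemma 8.5(i). -/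
theorem statement_16
    (d : ℕ) (hd : 2 ≤ d)
    (D : Set (EuclideanSpace ℝ (Fin d))) (hDopen : IsOpen D)
    (hDbdd : Bornology.IsBounded D)
    (hHaus : ∀ ε : ℝ, 0 < ε → ε < 1 → ∃ c : ℝ, 0 < c ∧
      ∀ x ∈ D, ∀ ρ : ℝ, 0 < ρ →
        (∫ z in D ∩ Metric.ball x ρ, dd D z ^ (-ε))
          ≤ c * max (dd D x) ρ ^ (-ε) * ρ ^ (d : ℝ))
    (α β βs γ γs : ℝ) (hα0 : 0 < α) (hα2 : α < 2)
    (hβ : 0 ≤ β) (hβs : β ≤ βs) (hγ : 0 ≤ γ) (hγs : γ ≤ γs)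
    (Φ Ψ l : ℝ → ℝ)
    (hΦ : StdFun Φ) (hΦinc : AlmostIncreasingOn01 Φ)
    (hΦlow : LowerIndexIs Φ β) (hΦup : UpperIndexIs Φ βs)
    (hΨ : StdFun Ψ) (hΨinc : AlmostIncreasingOn01 Ψ)
    (hΨlow : LowerIndexIs Ψ γ) (hΨup : UpperIndexIs Ψ γs)
    (hl : StdFun l) (hlscale : SlowlyVaryingScaling l)
    (hgap : γs < α + β) (hlinc : γ = 0 → AlmostIncreasingOn01 l) :
    ∃ C : ℝ, 0 < C ∧
      ∀ r : ℝ, 0 < r → r < Metric.diam D → ∀ x ∈ D, dd D x < 5 * r →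
        ∀ t : ℝ, 0 < t → t ≤ r ^ α → ∀ k : ℝ, 0 < k →
          (∫ z in D ∩ Metric.ball x r,
              min (t ^ (-(d : ℝ) / α)) (t * dist x z ^ (-(d : ℝ) - α)) *
                Φ (max (dd D x) (t ^ (1 / α)) / dist x z) * Ψ (dd D z / r) *
                l (dd D z / k))
            ≤ C * (Ψ (max (dd D x) (t ^ (1 / α)) / r) *
                l (max (dd D x) (t ^ (1 / α)) / k)) :=
  statement_16_general d hd D hDopen hDbdd α β γ γs hα0 hγ hγs Φ Ψ l hΦ hΦlow hΨ hΨinc hΨlow hΨup hl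
    hlscale hgap hlinc
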